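/- Let Q*, Q̂ : S × A → ℝ be bounded functions with ‖Q*‖_∞ ≤ r_max/(1-γ) and ‖Q̂‖_∞ ≤ r_max/(1-γ), where 0 ≤ γ < 1 and r_max ≥ 0. Suppose for all (s,a): Q*(s,a) - Q̂(s,a) = γ · Σ_{s',a'} P(s'|s,a)[π*(a'|s')Q*(s',a') - π̂(a'|s')Q̂(s',a')], where P(·|s,a), π*(·|s'), π̂(·|s') are probability distributions on finite sets. If ε_π = sup_{s'} D_TV(π*(·|s'), π̂(·|s')), then sup_{s,a} |Q*(s,a) - Q̂(s,a)| ≤ 2γ r_max ε_π / (1-γ)². -/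

import Mathlib

/-!
Write `Δ` for the largest value of `|Q* - Q̂|`. In the Bellman equation split
`π* Q* - π̂ Q̂ = π* (Q* - Q̂) + (π* - π̂) Q̂`: averaging against the distributions `P` and `π*`
bounds the first part by `Δ`, and the second by `2 D_TV(π*, π̂) ‖Q̂‖_∞ ≤ 2 ε_π r_max / (1 - γ)`.
Hence `Δ ≤ γ (Δ + 2 ε_π r_max / (1 - γ))`, and solving this contraction inequality for `Δ`
gives the bound.
-/

open Finset

/-- Total variation distance between pmfs on a finite set. -/
noncomputable def tv {X : Type*} [Fintype X] (p q : X → ℝ) : ℝ :=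
  (∑ x, |p x - q x|) / 2

section

variable {X : Type*}

lemma abs_sum_mul_le_of_sum_eq_one [Fintype X] {p g : X → ℝ} {D : ℝ} (hp : ∀ x, 0 ≤ p x)
    (hp_sum : ∑ x, p x = 1) (hg : ∀ x, |g x| ≤ D) : |∑ x, p x * g x| ≤ D :=
  calc |∑ x, p x * g x|
      ≤ ∑ x, |p x * g x| := abs_sum_le_sum_abs _ _
    _ ≤ ∑ x, p x * D := by
        gcongr with x
        rw [abs_mul, abs_of_nonneg (hp x)]
        exact mul_le_mul_of_nonneg_left (hg x) (hp x)
    _ = D := by rw [← sum_mul, hp_sum, one_mul]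

lemma abs_sum_sub_mul_le_two_mul_tv_mul [Fintype X] (p q : X → ℝ) {f : X → ℝ} {M : ℝ}
    (hf : ∀ x, |f x| ≤ M) : |∑ x, (p x - q x) * f x| ≤ 2 * tv p q * M :=
  calc |∑ x, (p x - q x) * f x|
      ≤ ∑ x, |(p x - q x) * f x| := abs_sum_le_sum_abs _ _
    _ ≤ ∑ x, |p x - q x| * M := by
        gcongr with x
        rw [abs_mul]
        exact mul_le_mul_of_nonneg_left (hf x) (abs_nonneg _)
    _ = 2 * tv p q * M := by rw [← sum_mul, tv]; ring

lemma abs_sum_mul_sub_mul_le [Fintype X] {p q f g : X → ℝ} {D M : ℝ} (hp : ∀ x, 0 ≤ p x)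
    (hp_sum : ∑ x, p x = 1) (hfg : ∀ x, |f x - g x| ≤ D) (hg : ∀ x, |g x| ≤ M) :
    |∑ x, (p x * f x - q x * g x)| ≤ D + 2 * tv p q * M := by
  have hsplit : ∑ x, (p x * f x - q x * g x)
      = ∑ x, p x * (f x - g x) + ∑ x, (p x - q x) * g x := by
    rw [← sum_add_distrib]
    exact sum_congr rfl fun x _ => by ring
  rw [hsplit]
  exact (abs_add_le _ _).trans (add_le_add (abs_sum_mul_le_of_sum_eq_one hp hp_sum hfg)
    (abs_sum_sub_mul_le_two_mul_tv_mul p q hg))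

lemma Finite.le_div_one_sub_of_forall_le [Finite X] {f : X → ℝ} {γ c : ℝ} (hγ : γ < 1)
    (h : ∀ D, (∀ y, f y ≤ D) → ∀ x, f x ≤ γ * D + c) (x : X) : f x ≤ c / (1 - γ) := by
  have : Nonempty X := ⟨x⟩
  obtain ⟨x₀, hx₀⟩ := Finite.exists_max f
  have hmax : f x₀ * (1 - γ) ≤ c := by nlinarith [h (f x₀) hx₀ x₀]
  exact (hx₀ x).trans ((le_div_iff₀ (sub_pos.mpr hγ)).mpr hmax)

end

theorem stmt0_general {S A : Type*} [Fintype S] [Fintype A]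
    (γ rmax : ℝ) (hγ0 : 0 ≤ γ) (hγ1 : γ < 1) (hr : 0 ≤ rmax)
    (Qstar Qhat : S → A → ℝ)
    (hQhat : ∀ s a, |Qhat s a| ≤ rmax / (1 - γ))
    (P : S → A → S → ℝ) (πstar πhat : S → A → ℝ)
    (hPnn : ∀ s a s', 0 ≤ P s a s') (hPsum : ∀ s a, ∑ s', P s a s' = 1)
    (hπsnn : ∀ s' a', 0 ≤ πstar s' a') (hπssum : ∀ s', ∑ a', πstar s' a' = 1)
    (hBellman : ∀ s a, Qstar s a - Qhat s a =
      γ * ∑ s', ∑ a', P s a s' * (πstar s' a' * Qstar s' a' - πhat s' a' * Qhat s' a'))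
    (επ : ℝ) (hεπ : επ = ⨆ s', tv (πstar s') (πhat s')) :
    ∀ s a, |Qstar s a - Qhat s a| ≤ 2 * γ * rmax * επ / (1 - γ) ^ 2 := by
  have h1γ : 0 < 1 - γ := sub_pos.mpr hγ1
  have hM : 0 ≤ rmax / (1 - γ) := div_nonneg hr h1γ.le
  have htv : ∀ s', tv (πstar s') (πhat s') ≤ επ := fun s' =>
    hεπ ▸ le_ciSup (Set.finite_range fun s' => tv (πstar s') (πhat s')).bddAbove s'
  have hcontr : ∀ D, (∀ p : S × A, |Qstar p.1 p.2 - Qhat p.1 p.2| ≤ D) →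
      ∀ p : S × A, |Qstar p.1 p.2 - Qhat p.1 p.2| ≤ γ * D + γ * (2 * επ * (rmax / (1 - γ))) := by
    intro D hD ⟨s, a⟩
    have hnext : ∀ s', |∑ a', (πstar s' a' * Qstar s' a' - πhat s' a' * Qhat s' a')|
        ≤ D + 2 * επ * (rmax / (1 - γ)) := fun s' =>
      (abs_sum_mul_sub_mul_le (hπsnn s') (hπssum s') (fun a' => hD (s', a')) (hQhat s')).trans
        (by gcongr; exact htv s')
    simp only [hBellman s a, ← mul_sum, abs_mul, abs_of_nonneg hγ0, ← mul_add]
    exact mul_le_mul_of_nonneg_left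
      (abs_sum_mul_le_of_sum_eq_one (hPnn s a) (hPsum s a) hnext) hγ0
  intro s a
  refine (Finite.le_div_one_sub_of_forall_le hγ1 hcontr (s, a)).trans_eq ?_
  field_simp

/-- Theorem 1 (general oracle imitation discrepancy). -/
theorem stmt0 {S A : Type*} [Fintype S] [Fintype A] [Nonempty S] [Nonempty A]
    (γ rmax : ℝ) (hγ0 : 0 ≤ γ) (hγ1 : γ < 1) (hr : 0 ≤ rmax)
    (Qstar Qhat : S → A → ℝ)
    (hQstar : ∀ s a, |Qstar s a| ≤ rmax / (1 - γ))
    (hQhat : ∀ s a, |Qhat s a| ≤ rmax / (1 - γ))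
    (P : S → A → S → ℝ) (πstar πhat : S → A → ℝ)
    (hPnn : ∀ s a s', 0 ≤ P s a s') (hPsum : ∀ s a, ∑ s', P s a s' = 1)
    (hπsnn : ∀ s' a', 0 ≤ πstar s' a') (hπssum : ∀ s', ∑ a', πstar s' a' = 1)
    (hπhnn : ∀ s' a', 0 ≤ πhat s' a') (hπhsum : ∀ s', ∑ a', πhat s' a' = 1)
    (hBellman : ∀ s a, Qstar s a - Qhat s a =
      γ * ∑ s', ∑ a', P s a s' * (πstar s' a' * Qstar s' a' - πhat s' a' * Qhat s' a'))
    (επ : ℝ) (hεπ : επ = ⨆ s', tv (πstar s') (πhat s')) :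
    ∀ s a, |Qstar s a - Qhat s a| ≤ 2 * γ * rmax * επ / (1 - γ) ^ 2 :=
  stmt0_general γ rmax hγ0 hγ1 hr Qstar Qhat hQhat P πstar πhat hPnn hPsum hπsnn hπssum hBellman επ
    hεπ
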